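/- arXiv:2603.23962 — 2 statements merged into one kernel-verified Lean document; each statement's English description precedes it below -/
import Mathlib

section
/- Let {q_t}_{t>0} be measurable kernels on ℝⁿ×ℝⁿ satisfying the Gaussian size bound |q_t(y,z)| ≤ C₁ t^{-n} exp(−c₁|y−z|²/t²) for all t > 0 and y,z ∈ ℝⁿ. Let φ ∈ C^∞([0,∞)) with 0 ≤ φ ≤ 1, φ ≡ 1 on [0,1] and φ ≡ 0 on [2,∞), and for γ > 0 set q_{t,γ}(y,z) = q_t(y,z)(1 − φ(t/γ)). Let S_b and S_{b,γ} denote the commutator area integrals associated with the kernels q_t and q_{t,γ} respectively. Then for every b ∈ C_c^∞(ℝⁿ) there exists a constant C, depending only on n, C₁, c₁, ‖b‖_∞ and ‖∇b‖_∞, such that for every γ > 0, every bounded compactly supported f, and every x ∈ ℝⁿ: |S_{b,γ} f(x) − S_b f(x)| ≤ C γ Mf(x). In particular, the truncated commutators S_{b,γ} converge to S_b in operator norm on L^p(w) and on weighted Morrey spaces as γ → 0. -/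
open MeasureTheory ENNReal Set

noncomputable section

/-- Euclidean space `ℝⁿ`. -/
abbrev Rn (n : ℕ) := EuclideanSpace ℝ (Fin n)

/-- Axis-parallel cube with center `c` and half side length `r`. -/
def cube (n : ℕ) (c : Rn n) (r : ℝ) : Set (Rn n) := {x | ∀ i, |x i - c i| ≤ r}

/-- Weighted measure `w(s) = ∫_s w dx` of a set, as an extended nonnegative real. -/
def wSet (n : ℕ) (w : Rn n → ℝ) (s : Set (Rn n)) : ℝ≥0∞ :=
  ∫⁻ x in s, ENNReal.ofReal (w x)

/-- Muckenhoupt `A_p` characteristic `[w]_{A_p}` (supremum over all axis-parallel cubes). -/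
def ApConst (n : ℕ) (p : ℝ) (w : Rn n → ℝ) : ℝ≥0∞ :=
  ⨆ (c : Rn n) (r : ℝ) (_ : 0 < r),
    (wSet n w (cube n c r) / volume (cube n c r)) *
      ((∫⁻ x in cube n c r, (ENNReal.ofReal (w x)) ^ (-(1 : ℝ) / (p - 1))) /
        volume (cube n c r)) ^ (p - 1)

/-- The `BMO` seminorm `‖b‖_{BMO}` (supremum over all axis-parallel cubes). -/
def bmoNorm (n : ℕ) (b : Rn n → ℝ) : ℝ≥0∞ :=
  ⨆ (c : Rn n) (r : ℝ) (_ : 0 < r),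
    (∫⁻ x in cube n c r, ENNReal.ofReal |b x - ⨍ y in cube n c r, b y|) /
      volume (cube n c r)

/-- Pointwise (nonnegative extended real) norm of a complex valued function. -/
def nn (n : ℕ) (f : Rn n → ℂ) : Rn n → ℝ≥0∞ := fun x => (‖f x‖₊ : ℝ≥0∞)

/-- Weighted `L^p(w)` norm of an `ℝ≥0∞`-valued function. -/
def wLp (n : ℕ) (p : ℝ) (w : Rn n → ℝ) (g : Rn n → ℝ≥0∞) : ℝ≥0∞ :=
  (∫⁻ x, g x ^ p * ENNReal.ofReal (w x)) ^ (1 / p)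

/-- Weighted Morrey `L^{p,κ}(w)` norm of an `ℝ≥0∞`-valued function
(supremum over all Euclidean balls). -/
def morrey (n : ℕ) (p κ : ℝ) (w : Rn n → ℝ) (g : Rn n → ℝ≥0∞) : ℝ≥0∞ :=
  ⨆ (c : Rn n) (r : ℝ) (_ : 0 < r),
    ((∫⁻ x in Metric.ball c r, g x ^ p * ENNReal.ofReal (w x)) /
      (wSet n w (Metric.ball c r)) ^ κ) ^ (1 / p)

/-- The square function `G` associated with the family of kernels `K_t`. -/
def sqFun (n : ℕ) (mu : ℝ) (K : ℝ → Rn n → Rn n → ℂ) (f : Rn n → ℂ) (x : Rn n) : ℝ≥0∞ :=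
  (∫⁻ t in Ioi (0 : ℝ), ∫⁻ y,
      ENNReal.ofReal ((t / (t + ‖x - y‖)) ^ ((n : ℝ) * mu)) *
        ((‖∫ z, K t y z * f z‖₊ : ℝ≥0∞) ^ 2) / ENNReal.ofReal (t ^ ((n : ℝ) + 1))) ^ (1 / 2 : ℝ)

/-- The commutator `G_b` of the square function `G` with a function `b`. -/
def sqFunComm (n : ℕ) (mu : ℝ) (K : ℝ → Rn n → Rn n → ℂ) (b : Rn n → ℝ) (f : Rn n → ℂ)
    (x : Rn n) : ℝ≥0∞ :=
  sqFun n mu K (fun z => ((b x - b z : ℝ) : ℂ) * f z) x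

/-- The area integral `S` associated with the family of kernels `q_t`. -/
def areaInt (n : ℕ) (q : ℝ → Rn n → Rn n → ℂ) (f : Rn n → ℂ) (x : Rn n) : ℝ≥0∞ :=
  (∫⁻ t in Ioi (0 : ℝ), ∫⁻ y in Metric.ball x t,
      ((‖∫ z, q t y z * f z‖₊ : ℝ≥0∞) ^ 2) / ENNReal.ofReal (t ^ ((n : ℝ) + 1))) ^ (1 / 2 : ℝ)

/-- The commutator `S_b` of the area integral with a function `b`. -/
def areaIntComm (n : ℕ) (q : ℝ → Rn n → Rn n → ℂ) (b : Rn n → ℝ) (f : Rn n → ℂ)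
    (x : Rn n) : ℝ≥0∞ :=
  areaInt n q (fun z => ((b x - b z : ℝ) : ℂ) * f z) x

/-- `T` is of weak type `(1,1)` with constant `A`. -/
def WeakType11 (n : ℕ) (T : (Rn n → ℂ) → Rn n → ℝ≥0∞) (A : ℝ) : Prop :=
  ∀ f : Rn n → ℂ, Integrable f volume → ∀ lam : ℝ, 0 < lam →
    volume {x | ENNReal.ofReal lam < T f x} ≤
      ENNReal.ofReal A * (ENNReal.ofReal lam)⁻¹ * ∫⁻ x, (‖f x‖₊ : ℝ≥0∞)

/-- The (uncentered) Hardy–Littlewood maximal function over axis-parallel cubes,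
applied to an `ℝ≥0∞`-valued function. -/
def maxFun (n : ℕ) (g : Rn n → ℝ≥0∞) (x : Rn n) : ℝ≥0∞ :=
  ⨆ (c : Rn n) (r : ℝ) (_ : 0 < r) (_ : x ∈ cube n c r),
    (∫⁻ y in cube n c r, g y) / volume (cube n c r)

/-- `M_δ g = (M (g^δ))^{1/δ}`. -/
def maxFunD (n : ℕ) (δ : ℝ) (g : Rn n → ℝ≥0∞) (x : Rn n) : ℝ≥0∞ :=
  (maxFun n (fun y => g y ^ δ) x) ^ (1 / δ)

/-- The Fefferman–Stein sharp maximal function of an `ℝ≥0∞`-valued function,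
with `|g y - k|` interpreted via truncated subtraction in both directions. -/
def sharpMax (n : ℕ) (g : Rn n → ℝ≥0∞) (x : Rn n) : ℝ≥0∞ :=
  ⨆ (c : Rn n) (r : ℝ) (_ : 0 < r) (_ : x ∈ cube n c r),
    ⨅ (k : ℝ≥0∞), (∫⁻ y in cube n c r, ((g y - k) + (k - g y))) / volume (cube n c r)

/-- `M_δ^♯ g = (M^♯ (g^δ))^{1/δ}`. -/
def sharpMaxD (n : ℕ) (δ : ℝ) (g : Rn n → ℝ≥0∞) (x : Rn n) : ℝ≥0∞ :=
  (sharpMax n (fun y => g y ^ δ) x) ^ (1 / δ)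

/-- The Fefferman–Stein sharp maximal function of a real valued function. -/
def sharpMaxR (n : ℕ) (f : Rn n → ℝ) (x : Rn n) : ℝ≥0∞ :=
  ⨆ (c : Rn n) (r : ℝ) (_ : 0 < r) (_ : x ∈ cube n c r),
    ⨅ (k : ℝ), (∫⁻ y in cube n c r, ENNReal.ofReal |f y - k|) / volume (cube n c r)

/-- Luxemburg `Φ`-average norm `‖g‖_{Φ,Q}` over a set `Q`. -/
def orliczNorm (n : ℕ) (Φ : ℝ → ℝ) (Q : Set (Rn n)) (g : Rn n → ℝ) : ℝ :=
  sInf {lam : ℝ | 0 < lam ∧ (⨍ x in Q, Φ (|g x| / lam)) ≤ 1}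

/-- Orlicz maximal function `M_Φ g(x) = sup_{Q ∋ x} ‖g‖_{Φ,Q}`. -/
def orliczMax (n : ℕ) (Φ : ℝ → ℝ) (g : Rn n → ℝ) (x : Rn n) : ℝ≥0∞ :=
  ⨆ (c : Rn n) (r : ℝ) (_ : 0 < r) (_ : x ∈ cube n c r),
    ENNReal.ofReal (orliczNorm n Φ (cube n c r) g)

/-- The Young function `Φ(t) = t (1 + log⁺ t)^s`. -/
def PhiLogL (s : ℝ) : ℝ → ℝ := fun t => t * (1 + max (Real.log t) 0) ^ s

/-- The `Osc_{exp L^r}` seminorm of `b`. -/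
def oscNorm (n : ℕ) (r : ℝ) (b : Rn n → ℝ) : ℝ≥0∞ :=
  ⨆ (c : Rn n) (rad : ℝ) (_ : 0 < rad),
    ENNReal.ofReal (orliczNorm n (fun t => Real.exp (t ^ r) - 1) (cube n c rad)
      (fun x => b x - ⨍ y in cube n c rad, b y))

/-- Muckenhoupt `A_1` characteristic. -/
def A1Const (n : ℕ) (w : Rn n → ℝ) : ℝ≥0∞ :=
  ⨆ (c : Rn n) (r : ℝ) (_ : 0 < r),
    (wSet n w (cube n c r) / volume (cube n c r)) *
      essSup (fun x => (ENNReal.ofReal (w x))⁻¹) (volume.restrict (cube n c r))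

/-- Muckenhoupt (Hruščëv) `A_∞` characteristic. -/
def AinfConst (n : ℕ) (w : Rn n → ℝ) : ℝ≥0∞ :=
  ⨆ (c : Rn n) (r : ℝ) (_ : 0 < r),
    (wSet n w (cube n c r) / volume (cube n c r)) *
      ENNReal.ofReal (Real.exp (⨍ x in cube n c r, Real.log (w x)⁻¹))

/-- `b ∈ CMO(ℝⁿ)`: `b` lies in the closure of `C_c^∞(ℝⁿ)` in the `BMO` norm. -/
def MemCMO (n : ℕ) (b : Rn n → ℝ) : Prop :=
  ∀ ε : ℝ, 0 < ε → ∃ g : Rn n → ℝ, ContDiff ℝ (⊤ : ℕ∞) g ∧ HasCompactSupport g ∧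
    bmoNorm n (fun x => b x - g x) < ENNReal.ofReal ε

/-- Pointwise "absolute difference" of two `ℝ≥0∞`-valued functions. -/
def eDistFun (n : ℕ) (g h : Rn n → ℝ≥0∞) : Rn n → ℝ≥0∞ :=
  fun x => (g x - h x) + (h x - g x)

lemma volume_cube (n : ℕ) (c : Rn n) {r : ℝ} (hr : 0 ≤ r) :
    volume (cube n c r) = ENNReal.ofReal (2 * r) ^ n := by
  have h : cube n c r =
      (MeasurableEquiv.toLp 2 (Fin n → ℝ)).symm ⁻¹'
        (Set.univ.pi fun i => Icc (c i - r) (c i + r)) := by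
    ext x
    simp only [cube, mem_setOf_eq, mem_preimage, Set.mem_pi, mem_univ, forall_true_left,
      mem_Icc, MeasurableEquiv.toLp_symm_apply]
    constructor
    · intro h i; have := abs_le.1 (h i); exact ⟨by linarith [this.1], by linarith [this.2]⟩
    · intro h i; rw [abs_le]; have := h i; exact ⟨by linarith [this.1], by linarith [this.2]⟩
  rw [h, (EuclideanSpace.volume_preserving_symm_measurableEquiv_toLp (Fin n)).measure_preimage
    (MeasurableSet.univ_pi fun i => measurableSet_Icc).nullMeasurableSet]
  rw [volume_pi_pi]
  calc ∏ i : Fin n, volume (Icc (c i - r) (c i + r))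
      = ∏ _i : Fin n, ENNReal.ofReal (2 * r) := by
        apply Finset.prod_congr rfl; intro i _; rw [Real.volume_Icc]; congr 1; ring
    _ = ENNReal.ofReal (2 * r) ^ n := by rw [Finset.prod_const]; simp

lemma abs_coord_le_norm {n : ℕ} (x : Rn n) (i : Fin n) : |x i| ≤ ‖x‖ := by
  rw [EuclideanSpace.norm_eq x]
  have h1 : |x i| = Real.sqrt (x i ^ 2) := by rw [Real.sqrt_sq_eq_abs]
  rw [h1]
  apply Real.sqrt_le_sqrt
  simp only [Real.norm_eq_abs, sq_abs]
  exact Finset.single_le_sum (f := fun j => x j ^ 2) (fun j _ => sq_nonneg _) (Finset.mem_univ i)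

lemma mem_cube_self {n : ℕ} (x : Rn n) {r : ℝ} (hr : 0 ≤ r) : x ∈ cube n x r := by
  intro i; simpa using hr

lemma ball_subset_cube {n : ℕ} (x y : Rn n) {R s : ℝ} (h : ‖y - x‖ + R ≤ s) :
    Metric.ball y R ⊆ cube n x s := by
  intro z hz
  rw [Metric.mem_ball] at hz
  intro i
  have h1 : |z i - x i| ≤ ‖z - x‖ := by
    have := abs_coord_le_norm (z - x) i
    simpa using this
  have h2 : ‖z - x‖ ≤ ‖z - y‖ + ‖y - x‖ := norm_sub_le_norm_sub_add_norm_sub z y x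
  have h3 : ‖z - y‖ < R := by rw [← dist_eq_norm]; exact hz
  linarith

lemma setLintegral_le_maxFun {n : ℕ} (g : Rn n → ℝ≥0∞) (x : Rn n) {s : ℝ} (hs : 0 < s) :
    ∫⁻ z in cube n x s, g z ≤ maxFun n g x * ENNReal.ofReal (2 * s) ^ n := by
  have hV : volume (cube n x s) = ENNReal.ofReal (2 * s) ^ n := volume_cube n x hs.le
  have hV0 : (ENNReal.ofReal (2 * s) ^ n) ≠ 0 := by
    apply pow_ne_zero; rw [Ne, ENNReal.ofReal_eq_zero, not_le]; linarith
  have hVtop : (ENNReal.ofReal (2 * s) ^ n) ≠ ∞ := by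
    exact ENNReal.pow_ne_top ENNReal.ofReal_ne_top
  have h1 : (∫⁻ z in cube n x s, g z) / (ENNReal.ofReal (2 * s) ^ n) ≤ maxFun n g x := by
    rw [← hV]
    exact le_iSup_of_le x (le_iSup_of_le s (le_iSup_of_le hs
      (le_iSup_of_le (mem_cube_self x hs.le) le_rfl)))
  calc ∫⁻ z in cube n x s, g z
      = (∫⁻ z in cube n x s, g z) / (ENNReal.ofReal (2*s)^n) * (ENNReal.ofReal (2*s)^n) :=
        (ENNReal.div_mul_cancel hV0 hVtop).symm
    _ ≤ maxFun n g x * ENNReal.ofReal (2*s)^n := mul_le_mul_left h1 _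

lemma exists_dyadic {u : ℝ} (hu : 2 ≤ u) : ∃ k : ℕ, 1 ≤ k ∧ (2:ℝ)^k ≤ u ∧ u < 2^(k+1) := by
  have hu0 : (0:ℝ) ≤ u := by linarith
  set m := Nat.floor u with hm
  have hm2 : 2 ≤ m := Nat.le_floor (by exact_mod_cast hu)
  have hm0 : m ≠ 0 := by omega
  have hlt : m < 2 ^ (Nat.log 2 m + 1) := Nat.lt_pow_succ_log_self (by norm_num) m
  have hle : 2 ^ Nat.log 2 m ≤ m := Nat.pow_log_le_self 2 hm0
  refine ⟨Nat.log 2 m, ?_, ?_, ?_⟩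
  · rcases Nat.eq_zero_or_pos (Nat.log 2 m) with h | h
    · rw [h] at hlt; norm_num at hlt; omega
    · exact h
  · calc ((2:ℝ))^Nat.log 2 m = ((2^Nat.log 2 m : ℕ):ℝ) := by push_cast; ring
      _ ≤ (m:ℝ) := by exact_mod_cast hle
      _ ≤ u := Nat.floor_le hu0
  · calc u < (m:ℝ) + 1 := Nat.lt_floor_add_one u
      _ ≤ ((2^(Nat.log 2 m + 1) : ℕ):ℝ) := by exact_mod_cast Nat.succ_le_of_lt hlt
      _ = 2^(Nat.log 2 m + 1) := by push_cast; ring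

lemma exp_neg_mul_pow_le {x : ℝ} (hx : 0 < x) (m : ℕ) :
    Real.exp (-x) * x ^ m ≤ (Nat.factorial m : ℝ) := by
  have h := Real.pow_div_factorial_le_exp x hx.le m
  have hm : (0:ℝ) < Nat.factorial m := by exact_mod_cast Nat.factorial_pos m
  rw [div_le_iff₀ hm] at h
  rw [Real.exp_neg]
  calc (Real.exp x)⁻¹ * x^m ≤ (Real.exp x)⁻¹ * (Real.exp x * Nat.factorial m) := by
        apply mul_le_mul_of_nonneg_left h (by positivity)
    _ = (Nat.factorial m : ℝ) := by field_simp

lemma edist_aux (P₀ Q₀ T : ℝ≥0∞) :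
    (((P₀+T)^(1/2:ℝ) - (Q₀+T)^(1/2:ℝ)) + ((Q₀+T)^(1/2:ℝ) - (P₀+T)^(1/2:ℝ))) ≤
      P₀^(1/2:ℝ) + Q₀^(1/2:ℝ) := by
  have h : ∀ a c : ℝ≥0∞, (a+T)^(1/2:ℝ) - (c+T)^(1/2:ℝ) ≤ a^(1/2:ℝ) := by
    intro a c
    rw [tsub_le_iff_right]
    calc (a+T)^(1/2:ℝ) ≤ (a + (c+T))^(1/2:ℝ) := by
          apply ENNReal.rpow_le_rpow _ (by norm_num)
          exact add_le_add_right le_add_self a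
      _ ≤ a^(1/2:ℝ) + (c+T)^(1/2:ℝ) := ENNReal.rpow_add_le_add_rpow _ _ (by norm_num) (by norm_num)
  exact add_le_add (h P₀ Q₀) (h Q₀ P₀)


lemma key (n : ℕ) {C₁ c₁ L : ℝ} (hC₁ : 0 < C₁) (hc₁ : 0 < c₁) (hL : 0 < L) :
    ∃ C₂ : ℝ, 0 < C₂ ∧
    ∀ (K : ℝ → Rn n → Rn n → ℂ),
      (∀ t, 0 < t → ∀ y z : Rn n,
        ‖K t y z‖ ≤ C₁ * t ^ (-(n:ℝ)) * Real.exp (-c₁ * ‖y - z‖ ^ 2 / t ^ 2)) →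
    ∀ (b : Rn n → ℝ), (∀ u v : Rn n, |b u - b v| ≤ L * ‖u - v‖) →
    ∀ (f : Rn n → ℂ), Measurable f →
    ∀ t, 0 < t → ∀ x y : Rn n, ‖x - y‖ ≤ t →
      (‖∫ z, K t y z * (((b x - b z : ℝ) : ℂ) * f z)‖₊ : ℝ≥0∞) ≤
        ENNReal.ofReal (C₂ * t) * maxFun n (nn n f) x := by
  set D : ℝ := 2 ^ (3*n+2) * Nat.factorial (n+1) / c₁ ^ (n+1) with hD
  have hDpos : 0 < D := by positivity
  refine ⟨C₁ * L * Real.exp c₁ * D * 2, by positivity, ?_⟩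
  intro K hK b hb f hf t ht x y hxy
  set M := maxFun n (nn n f) x with hM
  set W : Rn n → ℝ≥0∞ := fun z =>
    ENNReal.ofReal (C₁ * t ^ (-(n:ℝ)) * Real.exp (-c₁ * ‖y - z‖ ^ 2 / t ^ 2) *
      (L * (t + ‖y - z‖))) with hW
  have htn : (0:ℝ) < t ^ (-(n:ℝ)) := Real.rpow_pos_of_pos ht _
  have hbase : (0:ℝ) ≤ C₁ * t ^ (-(n:ℝ)) := (mul_pos hC₁ htn).le
  -- Step 1: pointwise domination of the integral
  have step1 : (‖∫ z, K t y z * (((b x - b z : ℝ) : ℂ) * f z)‖₊ : ℝ≥0∞) ≤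
      ∫⁻ z, W z * (‖f z‖₊ : ℝ≥0∞) := by
    refine le_trans (enorm_integral_le_lintegral_enorm _) (lintegral_mono fun z => ?_)
    rw [← ofReal_norm]
    have hnorm : ‖K t y z * (((b x - b z : ℝ) : ℂ) * f z)‖
        = ‖K t y z‖ * |b x - b z| * ‖f z‖ := by
      rw [norm_mul, norm_mul, Complex.norm_real, Real.norm_eq_abs]; ring
    rw [hnorm]
    have h1 : ‖K t y z‖ * |b x - b z| ≤
        C₁ * t ^ (-(n:ℝ)) * Real.exp (-c₁ * ‖y - z‖ ^ 2 / t ^ 2) * (L * (t + ‖y - z‖)) := by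
      apply mul_le_mul (hK t ht y z) ?_ (abs_nonneg _) (mul_nonneg hbase (Real.exp_pos _).le)
      calc |b x - b z| ≤ L * ‖x - z‖ := hb x z
        _ ≤ L * (t + ‖y - z‖) := by
            apply mul_le_mul_of_nonneg_left ?_ hL.le
            calc ‖x - z‖ ≤ ‖x - y‖ + ‖y - z‖ := norm_sub_le_norm_sub_add_norm_sub x y z
              _ ≤ t + ‖y - z‖ := by linarith
    calc ENNReal.ofReal (‖K t y z‖ * |b x - b z| * ‖f z‖)
        ≤ ENNReal.ofReal ((C₁ * t ^ (-(n:ℝ)) * Real.exp (-c₁ * ‖y - z‖ ^ 2 / t ^ 2) *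
            (L * (t + ‖y - z‖))) * ‖f z‖) :=
          ENNReal.ofReal_le_ofReal (mul_le_mul_of_nonneg_right h1 (norm_nonneg _))
      _ = W z * (‖f z‖₊ : ℝ≥0∞) := by
          rw [ENNReal.ofReal_mul (mul_nonneg (mul_nonneg hbase (Real.exp_pos _).le)
            (mul_nonneg hL.le (add_nonneg ht.le (norm_nonneg _)))), ofReal_norm, enorm_eq_nnnorm]
  -- dyadic pieces
  set β : ℕ → ℝ≥0∞ := fun k =>
    ENNReal.ofReal (C₁ * t ^ (-(n:ℝ)) * (Real.exp c₁ * Real.exp (-(c₁ * 4 ^ k))) *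
      (L * (2 ^ (k+2) * t))) with hβ
  -- Step 2: pointwise domination of W by the dyadic sum
  have step2 : ∀ z, W z ≤
      ∑' k, β k * (Metric.ball y (2 ^ (k+1) * t)).indicator (fun _ => (1:ℝ≥0∞)) z := by
    intro z
    have hr0 : 0 ≤ ‖y - z‖ := norm_nonneg _
    obtain ⟨k, hk1, hk2⟩ :
        ∃ k : ℕ, (k = 0 ∨ 2 ^ k * t ≤ ‖y - z‖) ∧ ‖y - z‖ < 2 ^ (k+1) * t := by
      rcases lt_or_ge ‖y - z‖ (2 * t) with h | h
      · refine ⟨0, Or.inl rfl, ?_⟩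
        norm_num
        linarith
      · have hu : 2 ≤ ‖y - z‖ / t := (le_div_iff₀ ht).2 (by linarith)
        obtain ⟨k, hk, h2, h3⟩ := exists_dyadic hu
        exact ⟨k, Or.inr ((le_div_iff₀ ht).1 h2), (div_lt_iff₀ ht).1 h3⟩
    have hzball : z ∈ Metric.ball y (2 ^ (k+1) * t) := by
      rw [Metric.mem_ball, dist_comm, dist_eq_norm]; exact hk2
    have hWβ : W z ≤ β k := by
      apply ENNReal.ofReal_le_ofReal
      have hexp : Real.exp (-c₁ * ‖y - z‖ ^ 2 / t ^ 2) ≤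
          Real.exp c₁ * Real.exp (-(c₁ * 4 ^ k)) := by
        rcases hk1 with h0 | hge
        · subst h0
          rw [← Real.exp_add]
          have he : c₁ + -(c₁ * 4 ^ 0) = 0 := by norm_num
          rw [he, Real.exp_zero, Real.exp_le_one_iff]
          have h2 : 0 ≤ c₁ * ‖y - z‖^2 / t^2 := by positivity
          have h3 : -c₁ * ‖y - z‖ ^ 2 / t ^ 2 = -(c₁ * ‖y - z‖^2 / t^2) := by ring
          rw [h3]; linarith
        · have hp2 : (0:ℝ) < 2 ^ k := by positivity
          have h4 : (4:ℝ)^k * t^2 ≤ ‖y - z‖^2 := by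
            have h5 : ((2:ℝ)^k * t)^2 ≤ ‖y - z‖^2 :=
              pow_le_pow_left₀ (by positivity) hge 2
            calc (4:ℝ)^k * t^2 = ((2:ℝ)^k * t)^2 := by
                  rw [mul_pow, ← pow_mul, show k*2 = 2*k from mul_comm k 2, pow_mul]
                  norm_num
              _ ≤ ‖y - z‖^2 := h5
          calc Real.exp (-c₁ * ‖y - z‖ ^ 2 / t ^ 2) ≤ Real.exp (-(c₁ * 4^k)) := by
                apply Real.exp_le_exp.2
                have h3 : -c₁ * ‖y - z‖ ^ 2 / t ^ 2 = -(c₁ * ‖y - z‖^2 / t^2) := by ring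
                rw [h3, neg_le_neg_iff, le_div_iff₀ (pow_pos ht 2)]
                nlinarith
            _ ≤ Real.exp c₁ * Real.exp (-(c₁ * 4^k)) := by
                nlinarith [Real.one_le_exp hc₁.le, Real.exp_pos (-(c₁ * 4^k))]
      have hlin : t + ‖y - z‖ ≤ 2 ^ (k+2) * t := by
        have h1 : (1:ℝ) ≤ 2 ^ (k+1) := one_le_pow₀ (by norm_num : (1:ℝ) ≤ 2)
        have h2 : (2:ℝ)^(k+2) = 2^(k+1) + 2^(k+1) := by rw [pow_succ]; ring
        nlinarith
      exact mul_le_mul (mul_le_mul_of_nonneg_left hexp hbase)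
        (mul_le_mul_of_nonneg_left hlin hL.le)
        (mul_nonneg hL.le (add_nonneg ht.le hr0))
        (mul_nonneg hbase (mul_nonneg (Real.exp_pos _).le (Real.exp_pos _).le))
    refine le_trans ?_ (ENNReal.le_tsum k)
    rw [Set.indicator_of_mem hzball, mul_one]
    exact hWβ
  -- Step 3: integrate the dyadic sum
  have step3 : ∫⁻ z, W z * (‖f z‖₊ : ℝ≥0∞) ≤
      ∑' k, β k * ∫⁻ z in Metric.ball y (2^(k+1)*t), (‖f z‖₊ : ℝ≥0∞) := by
    calc ∫⁻ z, W z * (‖f z‖₊ : ℝ≥0∞)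
        ≤ ∫⁻ z, (∑' k, β k * (Metric.ball y (2 ^ (k+1) * t)).indicator
            (fun _ => (1:ℝ≥0∞)) z) * (‖f z‖₊ : ℝ≥0∞) :=
          lintegral_mono fun z => mul_le_mul_left (step2 z) _
      _ = ∫⁻ z, ∑' k, β k * (Metric.ball y (2 ^ (k+1) * t)).indicator
            (fun _ => (1:ℝ≥0∞)) z * (‖f z‖₊ : ℝ≥0∞) := by
          apply lintegral_congr; intro z; rw [ENNReal.tsum_mul_right]
      _ = ∑' k, ∫⁻ z, β k * (Metric.ball y (2 ^ (k+1) * t)).indicator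
            (fun _ => (1:ℝ≥0∞)) z * (‖f z‖₊ : ℝ≥0∞) := by
          apply lintegral_tsum
          intro k
          exact (((measurable_const.indicator Metric.isOpen_ball.measurableSet).const_mul
            (β k)).mul hf.nnnorm.coe_nnreal_ennreal).aemeasurable
      _ = ∑' k, β k * ∫⁻ z in Metric.ball y (2^(k+1)*t), (‖f z‖₊ : ℝ≥0∞) := by
          apply tsum_congr; intro k
          rw [← lintegral_const_mul' (β k) _ ENNReal.ofReal_ne_top,
            ← lintegral_indicator Metric.isOpen_ball.measurableSet]
          apply lintegral_congr; intro z
          rw [mul_assoc]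
          congr 1
          by_cases hz : z ∈ Metric.ball y (2^(k+1)*t)
          · rw [Set.indicator_of_mem hz, Set.indicator_of_mem hz, one_mul]
          · rw [Set.indicator_of_notMem hz, Set.indicator_of_notMem hz, zero_mul, mul_zero]
  -- Step 4: maximal function bound for each ball
  have step4 : ∀ k : ℕ, ∫⁻ z in Metric.ball y (2^(k+1)*t), (‖f z‖₊ : ℝ≥0∞) ≤
      M * ENNReal.ofReal (2*(2^(k+2)*t)) ^ n := by
    intro k
    have hsub : Metric.ball y (2^(k+1)*t) ⊆ cube n x (2^(k+2)*t) := by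
      apply ball_subset_cube
      have hyx : ‖y - x‖ ≤ t := by rw [norm_sub_rev]; exact hxy
      have h1 : (1:ℝ) ≤ 2 ^ (k+1) := one_le_pow₀ (by norm_num : (1:ℝ) ≤ 2)
      have h2 : (2:ℝ)^(k+2) = 2^(k+1) + 2^(k+1) := by rw [pow_succ]; ring
      nlinarith
    calc ∫⁻ z in Metric.ball y (2^(k+1)*t), (‖f z‖₊ : ℝ≥0∞)
        ≤ ∫⁻ z in cube n x (2^(k+2)*t), (‖f z‖₊ : ℝ≥0∞) := lintegral_mono_set hsub
      _ ≤ M * ENNReal.ofReal (2*(2^(k+2)*t)) ^ n := by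
          have := setLintegral_le_maxFun (nn n f) x (s := 2^(k+2)*t) (by positivity)
          simpa [nn, hM] using this
  -- Step 5: sum the series
  have step5 : ∀ k : ℕ, β k * ENNReal.ofReal (2*(2^(k+2)*t)) ^ n ≤
      ENNReal.ofReal ((C₁ * L * Real.exp c₁ * t * D) * (1/2)^k) := by
    intro k
    have h2t : (0:ℝ) ≤ 2*(2^(k+2)*t) := by
      have : (0:ℝ) < 2^(k+2) := by positivity
      nlinarith
    have hβnn : (0:ℝ) ≤ C₁ * t ^ (-(n:ℝ)) * (Real.exp c₁ * Real.exp (-(c₁ * 4 ^ k))) *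
        (L * (2 ^ (k+2) * t)) := by
      have h2 : (0:ℝ) < 2^(k+2) := by positivity
      refine mul_nonneg (mul_nonneg hbase (mul_nonneg (Real.exp_pos _).le (Real.exp_pos _).le))
        (mul_nonneg hL.le (by nlinarith))
    rw [← ENNReal.ofReal_pow h2t, ← ENNReal.ofReal_mul hβnn]
    apply ENNReal.ofReal_le_ofReal
    have htn' : t ^ (-(n:ℝ)) = (t ^ n)⁻¹ := by
      rw [← Real.rpow_natCast t n, ← Real.rpow_neg ht.le]
    -- decay of the coefficients
    have hak : Real.exp (-(c₁ * 4^k)) * ((2:ℝ)^(k+2) * 2^((k+3)*n)) ≤ D * (1/2)^k := by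
      have hexp := exp_neg_mul_pow_le (x := c₁ * 4^k) (by positivity) (n+1)
      have hpow : ((2:ℝ)^(k+2) * 2^((k+3)*n)) * (2^k * c₁^(n+1)) ≤
          2 ^ (3*n+2) * (c₁ * 4^k)^(n+1) := by
        have e1 : ((2:ℝ)^(k+2) * 2^((k+3)*n)) * 2^k = 2^(2*k+2+(k+3)*n) := by
          rw [← pow_add, ← pow_add]; ring_nf
        have e2 : ((4:ℝ))^k = 2^(2*k) := by
          rw [show (4:ℝ) = 2^2 by norm_num, ← pow_mul]
        have e3 : (c₁ * 4^k)^(n+1) = c₁^(n+1) * 2^(2*k*(n+1)) := by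
          rw [mul_pow, e2, ← pow_mul]
        rw [e3]
        calc ((2:ℝ)^(k+2) * 2^((k+3)*n)) * (2^k * c₁^(n+1))
            = 2^(2*k+2+(k+3)*n) * c₁^(n+1) := by rw [← mul_assoc, e1]
          _ ≤ 2^(3*n+2+2*k*(n+1)) * c₁^(n+1) := by
              apply mul_le_mul_of_nonneg_right _ (by positivity)
              apply pow_le_pow_right₀ (by norm_num : (1:ℝ) ≤ 2)
              ring_nf
              omega
          _ = 2 ^ (3*n+2) * (c₁^(n+1) * 2^(2*k*(n+1))) := by rw [pow_add]; ring
      -- combine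
      have hfin : (Real.exp (-(c₁ * 4^k)) * ((2:ℝ)^(k+2) * 2^((k+3)*n))) * (2^k * c₁^(n+1)) ≤
          2 ^ (3*n+2) * Nat.factorial (n+1) := by
        calc (Real.exp (-(c₁ * 4^k)) * ((2:ℝ)^(k+2) * 2^((k+3)*n))) * (2^k * c₁^(n+1))
            = Real.exp (-(c₁ * 4^k)) * (((2:ℝ)^(k+2) * 2^((k+3)*n)) * (2^k * c₁^(n+1))) := by
              ring
          _ ≤ Real.exp (-(c₁ * 4^k)) * (2 ^ (3*n+2) * (c₁ * 4^k)^(n+1)) := by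
              apply mul_le_mul_of_nonneg_left hpow (Real.exp_pos _).le
          _ = 2 ^ (3*n+2) * (Real.exp (-(c₁ * 4^k)) * (c₁ * 4^k)^(n+1)) := by ring
          _ ≤ 2 ^ (3*n+2) * Nat.factorial (n+1) := by
              apply mul_le_mul_of_nonneg_left (exp_neg_mul_pow_le (by positivity) (n+1))
                (by positivity)
      have hq : (0:ℝ) < 2^k * c₁^(n+1) := by positivity
      rw [hD]
      rw [show (2:ℝ) ^ (3*n+2) * Nat.factorial (n+1) / c₁ ^ (n+1) * (1/2)^k
          = (2 ^ (3*n+2) * Nat.factorial (n+1)) / (2^k * c₁^(n+1)) by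
        field_simp [hc₁.ne']
        rw [← mul_pow]; norm_num]
      rw [le_div_iff₀ hq]
      exact hfin
    -- final real computation
    have heq : C₁ * t ^ (-(n:ℝ)) * (Real.exp c₁ * Real.exp (-(c₁ * 4 ^ k))) *
        (L * (2 ^ (k+2) * t)) * (2*(2^(k+2)*t))^n
        = (C₁ * L * Real.exp c₁ * t) *
            (Real.exp (-(c₁ * 4^k)) * ((2:ℝ)^(k+2) * 2^((k+3)*n))) := by
      have e4 : (2*((2:ℝ)^(k+2)*t))^n = 2^((k+3)*n) * t^n := by
        rw [show 2*((2:ℝ)^(k+2)*t) = 2^(k+3)*t by rw [pow_succ]; ring, mul_pow, ← pow_mul]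
      rw [e4, htn']
      have htnn : (t:ℝ)^n ≠ 0 := by positivity
      field_simp
    rw [heq]
    calc (C₁ * L * Real.exp c₁ * t) *
          (Real.exp (-(c₁ * 4^k)) * ((2:ℝ)^(k+2) * 2^((k+3)*n)))
        ≤ (C₁ * L * Real.exp c₁ * t) * (D * (1/2)^k) := by
          apply mul_le_mul_of_nonneg_left hak
          exact mul_nonneg (mul_nonneg (mul_nonneg hC₁.le hL.le) (Real.exp_pos _).le) ht.le
      _ = C₁ * L * Real.exp c₁ * t * D * (1/2)^k := by ring
  -- assemble
  have hsum : ∑' k, ENNReal.ofReal ((C₁ * L * Real.exp c₁ * t * D) * (1/2)^k)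
      = ENNReal.ofReal (C₁ * L * Real.exp c₁ * t * D) * 2 := by
    have h1 : ∀ k : ℕ, ENNReal.ofReal ((C₁ * L * Real.exp c₁ * t * D) * (1/2)^k)
        = ENNReal.ofReal (C₁ * L * Real.exp c₁ * t * D) * ENNReal.ofReal ((1/2:ℝ))^k := by
      intro k
      rw [ENNReal.ofReal_mul (mul_nonneg (mul_nonneg (mul_nonneg
        (mul_nonneg hC₁.le hL.le) (Real.exp_pos _).le) ht.le) hDpos.le),
        ENNReal.ofReal_pow (by norm_num)]
    calc ∑' k, ENNReal.ofReal ((C₁ * L * Real.exp c₁ * t * D) * (1/2)^k)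
        = ∑' k, ENNReal.ofReal (C₁ * L * Real.exp c₁ * t * D) *
            ENNReal.ofReal ((1/2:ℝ))^k := tsum_congr h1
      _ = ENNReal.ofReal (C₁ * L * Real.exp c₁ * t * D) *
            ∑' k, ENNReal.ofReal ((1/2:ℝ))^k := ENNReal.tsum_mul_left
      _ = ENNReal.ofReal (C₁ * L * Real.exp c₁ * t * D) * 2 := by
          congr 1
          have h12 : ENNReal.ofReal ((1:ℝ)/2) = 2⁻¹ := by
            rw [one_div, ENNReal.ofReal_inv_of_pos (by norm_num)]
            norm_num
          rw [h12, ENNReal.tsum_geometric, ENNReal.one_sub_inv_two, inv_inv]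
  calc (‖∫ z, K t y z * (((b x - b z : ℝ) : ℂ) * f z)‖₊ : ℝ≥0∞)
      ≤ ∫⁻ z, W z * (‖f z‖₊ : ℝ≥0∞) := step1
    _ ≤ ∑' k, β k * ∫⁻ z in Metric.ball y (2^(k+1)*t), (‖f z‖₊ : ℝ≥0∞) := step3
    _ ≤ ∑' k, β k * (M * ENNReal.ofReal (2*(2^(k+2)*t)) ^ n) := by
        apply ENNReal.tsum_le_tsum; intro k
        exact mul_le_mul_right (step4 k) _
    _ = (∑' k, β k * ENNReal.ofReal (2*(2^(k+2)*t)) ^ n) * M := by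
        rw [← ENNReal.tsum_mul_right]
        apply tsum_congr; intro k; ring
    _ ≤ (∑' k, ENNReal.ofReal ((C₁ * L * Real.exp c₁ * t * D) * (1/2)^k)) * M := by
        apply mul_le_mul_left
        exact ENNReal.tsum_le_tsum step5
    _ = (ENNReal.ofReal (C₁ * L * Real.exp c₁ * t * D) * 2) * M := by rw [hsum]
    _ = ENNReal.ofReal ((C₁ * L * Real.exp c₁ * D * 2) * t) * M := by
        congr 1
        rw [show (2:ℝ≥0∞) = ENNReal.ofReal 2 by norm_num, ← ENNReal.ofReal_mul
          (mul_nonneg (mul_nonneg (mul_nonneg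
            (mul_nonneg hC₁.le hL.le) (Real.exp_pos _).le) ht.le) hDpos.le)]
        congr 1
        ring

lemma scalar_calc (n : ℕ) {C₂ t : ℝ} (hC₂ : 0 < C₂) (ht : 0 < t) (M : ℝ≥0∞) :
    (ENNReal.ofReal (C₂*t) * M)^2 / ENNReal.ofReal (t ^ ((n:ℝ)+1)) * ENNReal.ofReal (2*t)^n
      ≤ ENNReal.ofReal (2^n * C₂^2 * t) * M^2 := by
  have hrp : t ^ ((n:ℝ)+1) = t ^ (n+1 : ℕ) := by
    rw [show ((n:ℝ)+1) = ((n+1:ℕ):ℝ) by push_cast; ring, Real.rpow_natCast]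
  have hd0 : ENNReal.ofReal (t ^ ((n:ℝ)+1)) ≠ 0 := by
    rw [Ne, ENNReal.ofReal_eq_zero, not_le, hrp]
    positivity
  have hdt : ENNReal.ofReal (t ^ ((n:ℝ)+1)) ≠ ∞ := ENNReal.ofReal_ne_top
  have hkey : ENNReal.ofReal (C₂*t)^2 * ENNReal.ofReal (2*t)^n
      = ENNReal.ofReal (2^n*C₂^2*t) * ENNReal.ofReal (t ^ ((n:ℝ)+1)) := by
    rw [← ENNReal.ofReal_pow (mul_pos hC₂ ht).le,
        ← ENNReal.ofReal_pow (by linarith : (0:ℝ) ≤ 2*t),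
        ← ENNReal.ofReal_mul (by positivity : (0:ℝ) ≤ (C₂*t)^2),
        ← ENNReal.ofReal_mul (mul_nonneg (by positivity) ht.le : (0:ℝ) ≤ 2^n*C₂^2*t)]
    congr 1
    rw [hrp]
    ring
  apply le_of_eq
  calc (ENNReal.ofReal (C₂*t) * M)^2 / ENNReal.ofReal (t ^ ((n:ℝ)+1)) * ENNReal.ofReal (2*t)^n
      = (ENNReal.ofReal (C₂*t)^2 * ENNReal.ofReal (2*t)^n) / ENNReal.ofReal (t ^ ((n:ℝ)+1))
          * M^2 := by
        rw [mul_pow, div_eq_mul_inv, div_eq_mul_inv]; ring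
    _ = ENNReal.ofReal (2^n*C₂^2*t) * M^2 := by
        rw [hkey, mul_div_assoc, ENNReal.div_self hd0 hdt, mul_one]


/-- Pointwise comparison of the smoothly truncated commutator area
integral `S_{b,γ}` with `S_b`: `|S_{b,γ} f(x) − S_b f(x)| ≤ C γ M f(x)` for
`b ∈ C_c^∞(ℝⁿ)`. -/
theorem truncated_commutator_areaInt_pointwise_approx
    (n : ℕ) (hn : 1 ≤ n) (C₁ c₁ : ℝ) (hC₁ : 0 < C₁) (hc₁ : 0 < c₁)
    (q : ℝ → Rn n → Rn n → ℂ)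
    (hqm : ∀ t, 0 < t → Measurable (Function.uncurry (q t)))
    (hqsize : ∀ t, 0 < t → ∀ y z : Rn n,
      ‖q t y z‖ ≤ C₁ * t ^ (-(n : ℝ)) * Real.exp (-c₁ * ‖y - z‖ ^ 2 / t ^ 2))
    (φ : ℝ → ℝ) (hφsmooth : ContDiff ℝ (⊤ : ℕ∞) φ) (hφ0 : ∀ t, 0 ≤ φ t) (hφ1 : ∀ t, φ t ≤ 1)
    (hφone : ∀ t : ℝ, 0 ≤ t → t ≤ 1 → φ t = 1) (hφzero : ∀ t : ℝ, 2 ≤ t → φ t = 0)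
    (b : Rn n → ℝ) (hb : ContDiff ℝ (⊤ : ℕ∞) b) (hbsupp : HasCompactSupport b) :
    ∃ C : ℝ, 0 < C ∧
      ∀ γ : ℝ, 0 < γ →
      ∀ f : Rn n → ℂ, Measurable f → (∃ M : ℝ, ∀ x, ‖f x‖ ≤ M) → HasCompactSupport f →
      ∀ x : Rn n,
        eDistFun n
            (areaIntComm n (fun t y z => q t y z * ((1 - φ (t / γ) : ℝ) : ℂ)) b f)
            (areaIntComm n q b f) x ≤
          ENNReal.ofReal (C * γ) * maxFun n (nn n f) x := by
  -- Lipschitz constant for b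
  obtain ⟨Kb, hKb⟩ := hb.lipschitzWith_of_hasCompactSupport hbsupp (by simp)
  set L : ℝ := (Kb : ℝ) + 1 with hLdef
  have hL : 0 < L := by positivity
  have hbl : ∀ u v : Rn n, |b u - b v| ≤ L * ‖u - v‖ := by
    intro u v
    have h1 := hKb.dist_le_mul u v
    rw [Real.dist_eq, dist_eq_norm] at h1
    have h2 : (Kb : ℝ) * ‖u - v‖ ≤ L * ‖u - v‖ := by
      apply mul_le_mul_of_nonneg_right _ (norm_nonneg _)
      simp [hLdef]
    linarith
  obtain ⟨C₂, hC₂, hkey⟩ := key n hC₁ hc₁ hL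
  set A : ℝ := 2^(n+2) * C₂^2 with hAdef
  have hA : 0 < A := by positivity
  refine ⟨2 * A ^ (1/2:ℝ) + 1, by positivity, ?_⟩
  intro γ hγ f hf _ _ x
  set M := maxFun n (nn n f) x with hM
  set F : (ℝ → Rn n → Rn n → ℂ) → ℝ → ℝ≥0∞ := fun K t =>
    ∫⁻ y in Metric.ball x t,
      ((‖∫ z, K t y z * (((b x - b z : ℝ) : ℂ) * f z)‖₊ : ℝ≥0∞) ^ 2) /
        ENNReal.ofReal (t ^ ((n : ℝ) + 1)) with hF
  set Ktr : ℝ → Rn n → Rn n → ℂ :=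
    fun t y z => q t y z * ((1 - φ (t / γ) : ℝ) : ℂ) with hKtr
  -- size bound for the truncated kernel
  have hsize_tr : ∀ t, 0 < t → ∀ y z : Rn n,
      ‖Ktr t y z‖ ≤ C₁ * t ^ (-(n : ℝ)) * Real.exp (-c₁ * ‖y - z‖ ^ 2 / t ^ 2) := by
    intro t ht y z
    have h1 : |1 - φ (t/γ)| ≤ 1 := by
      rw [abs_le]
      constructor <;> [linarith [hφ1 (t/γ)]; linarith [hφ0 (t/γ)]]
    calc ‖Ktr t y z‖ = ‖q t y z‖ * |1 - φ (t/γ)| := by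
          rw [hKtr]
          simp only []
          rw [norm_mul, Complex.norm_real, Real.norm_eq_abs]
      _ ≤ ‖q t y z‖ * 1 := mul_le_mul_of_nonneg_left h1 (norm_nonneg _)
      _ = ‖q t y z‖ := mul_one _
      _ ≤ _ := hqsize t ht y z
  -- the main inner bound, for both kernels
  have main_bound : ∀ K : ℝ → Rn n → Rn n → ℂ,
      (∀ t, 0 < t → ∀ y z : Rn n,
        ‖K t y z‖ ≤ C₁ * t ^ (-(n : ℝ)) * Real.exp (-c₁ * ‖y - z‖ ^ 2 / t ^ 2)) →
      (∫⁻ t in Ioc 0 (2*γ), F K t) ≤ ENNReal.ofReal (A*γ^2) * M^2 := by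
    intro K hKs
    have hinner : ∀ t, 0 < t → t ≤ 2*γ → F K t ≤ ENNReal.ofReal (2^n*C₂^2*t) * M^2 := by
      intro t ht htle
      have hpt : ∀ y ∈ Metric.ball x t,
          ((‖∫ z, K t y z * (((b x - b z : ℝ) : ℂ) * f z)‖₊ : ℝ≥0∞) ^ 2) /
            ENNReal.ofReal (t ^ ((n : ℝ) + 1)) ≤
          (ENNReal.ofReal (C₂*t) * M)^2 / ENNReal.ofReal (t ^ ((n : ℝ) + 1)) := by
        intro y hy
        have hxy : ‖x - y‖ ≤ t := by
          rw [← dist_eq_norm, dist_comm]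
          exact (Metric.mem_ball.1 hy).le
        have h := hkey K hKs b hbl f hf t ht x y hxy
        rw [← hM] at h
        exact ENNReal.div_le_div_right (pow_le_pow_left' h 2) _
      calc F K t ≤ ∫⁻ _y in Metric.ball x t,
            (ENNReal.ofReal (C₂*t) * M)^2 / ENNReal.ofReal (t ^ ((n : ℝ) + 1)) :=
            setLIntegral_mono' Metric.isOpen_ball.measurableSet hpt
        _ = (ENNReal.ofReal (C₂*t) * M)^2 / ENNReal.ofReal (t ^ ((n : ℝ) + 1)) *
              volume (Metric.ball x t) := setLIntegral_const _ _
        _ ≤ (ENNReal.ofReal (C₂*t) * M)^2 / ENNReal.ofReal (t ^ ((n : ℝ) + 1)) *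
              ENNReal.ofReal (2*t)^n := by
            apply mul_le_mul_right
            calc volume (Metric.ball x t) ≤ volume (cube n x t) := by
                  apply measure_mono
                  apply ball_subset_cube
                  simp [ht.le]
              _ = ENNReal.ofReal (2*t)^n := volume_cube n x ht.le
        _ ≤ ENNReal.ofReal (2^n*C₂^2*t) * M^2 := scalar_calc n hC₂ ht M
    calc ∫⁻ t in Ioc 0 (2*γ), F K t
        ≤ ∫⁻ _t in Ioc 0 (2*γ), ENNReal.ofReal (2^n*C₂^2*(2*γ)) * M^2 := by
          apply setLIntegral_mono' measurableSet_Ioc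
          intro t ht
          refine (hinner t ht.1 ht.2).trans (mul_le_mul_left ?_ _)
          apply ENNReal.ofReal_le_ofReal
          have h1 : (0:ℝ) < 2^n * C₂^2 := by positivity
          nlinarith [ht.2]
      _ = ENNReal.ofReal (2^n*C₂^2*(2*γ)) * M^2 * volume (Ioc (0:ℝ) (2*γ)) :=
          setLIntegral_const _ _
      _ ≤ ENNReal.ofReal (A*γ^2) * M^2 := by
          rw [Real.volume_Ioc]
          apply le_of_eq
          calc ENNReal.ofReal (2^n*C₂^2*(2*γ)) * M^2 * ENNReal.ofReal (2*γ - 0)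
              = (ENNReal.ofReal (2^n*C₂^2*(2*γ)) * ENNReal.ofReal (2*γ - 0)) * M^2 := by
                ring
            _ = ENNReal.ofReal (A*γ^2) * M^2 := by
                congr 1
                rw [← ENNReal.ofReal_mul (by positivity)]
                congr 1
                rw [hAdef, show (2:ℝ)^(n+2) = 2^n*4 by rw [pow_add]; norm_num]
                ring
  -- square root step
  have hsq : ∀ PP : ℝ≥0∞, PP ≤ ENNReal.ofReal (A*γ^2) * M^2 →
      PP ^ (1/2:ℝ) ≤ ENNReal.ofReal (A^(1/2:ℝ)*γ) * M := by
    intro PP h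
    calc PP^(1/2:ℝ) ≤ (ENNReal.ofReal (A*γ^2) * M^2)^(1/2:ℝ) :=
          ENNReal.rpow_le_rpow h (by norm_num)
      _ = ENNReal.ofReal (A*γ^2)^(1/2:ℝ) * (M^2)^(1/2:ℝ) :=
          ENNReal.mul_rpow_of_nonneg _ _ (by norm_num)
      _ = ENNReal.ofReal ((A*γ^2)^(1/2:ℝ)) * M := by
          rw [ENNReal.ofReal_rpow_of_nonneg (by positivity) (by norm_num)]
          congr 1
          rw [← ENNReal.rpow_natCast M 2, ← ENNReal.rpow_mul]
          norm_num
      _ = ENNReal.ofReal (A^(1/2:ℝ)*γ) * M := by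
          congr 2
          rw [Real.mul_rpow hA.le (by positivity)]
          congr 1
          rw [← Real.rpow_natCast γ 2, ← Real.rpow_mul hγ.le]
          norm_num
  -- splitting of the t-integral
  have hsplit : ∀ K : ℝ → Rn n → Rn n → ℂ, (∫⁻ t in Ioi (0:ℝ), F K t) =
      (∫⁻ t in Ioc 0 (2*γ), F K t) + (∫⁻ t in Ioi (2*γ), F K t) := by
    intro K
    rw [← lintegral_union measurableSet_Ioi Set.Ioc_disjoint_Ioi_same,
      Ioc_union_Ioi_eq_Ioi (by linarith : (0:ℝ) ≤ 2*γ)]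
  have htail : (∫⁻ t in Ioi (2*γ), F Ktr t) = ∫⁻ t in Ioi (2*γ), F q t := by
    apply setLIntegral_congr_fun measurableSet_Ioi
    intro t ht
    have hφz : φ (t/γ) = 0 := by
      apply hφzero
      rw [le_div_iff₀ hγ]
      have : 2*γ < t := ht
      linarith
    have : ∀ y : Rn n, (∫ z, Ktr t y z * (((b x - b z : ℝ) : ℂ) * f z)) =
        ∫ z, q t y z * (((b x - b z : ℝ) : ℂ) * f z) := by
      intro y
      apply integral_congr_ae
      apply ae_of_all
      intro z
      rw [hKtr]
      simp [hφz]
    rw [hF]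
    simp only []
    apply lintegral_congr
    intro y
    rw [this y]
  -- assemble everything
  have e1 : areaIntComm n Ktr b f x =
      ((∫⁻ t in Ioc 0 (2*γ), F Ktr t) + (∫⁻ t in Ioi (2*γ), F q t))^(1/2:ℝ) := by
    rw [areaIntComm, areaInt, hsplit Ktr, htail]
  have e2 : areaIntComm n q b f x =
      ((∫⁻ t in Ioc 0 (2*γ), F q t) + (∫⁻ t in Ioi (2*γ), F q t))^(1/2:ℝ) := by
    rw [areaIntComm, areaInt, hsplit q]
  have hP := hsq _ (main_bound Ktr hsize_tr)
  have hQ := hsq _ (main_bound q hqsize)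
  calc eDistFun n (areaIntComm n Ktr b f) (areaIntComm n q b f) x
      ≤ (∫⁻ t in Ioc 0 (2*γ), F Ktr t)^(1/2:ℝ) + (∫⁻ t in Ioc 0 (2*γ), F q t)^(1/2:ℝ) := by
        rw [eDistFun, e1, e2]
        exact edist_aux _ _ _
    _ ≤ ENNReal.ofReal (A^(1/2:ℝ)*γ) * M + ENNReal.ofReal (A^(1/2:ℝ)*γ) * M :=
        add_le_add hP hQ
    _ ≤ ENNReal.ofReal ((2 * A ^ (1/2:ℝ) + 1) * γ) * M := by
        rw [← add_mul, ← ENNReal.ofReal_add (by positivity) (by positivity)]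
        apply mul_le_mul_left
        apply ENNReal.ofReal_le_ofReal
        nlinarith [Real.rpow_nonneg hA.le (1/2:ℝ)]
end
end

section
/- Let {q_t}_{t>0} be measurable kernels on ℝⁿ×ℝⁿ satisfying the Gaussian size bound |q_t(y,z)| ≤ C₁ t^{-n} exp(−c₁|y−z|²/t²) for all t > 0 and y,z ∈ ℝⁿ, and let S_b denote the associated commutator area integral. Let b be a bounded measurable function with supp b ⊆ {z ∈ ℝⁿ : |z| < R} for some R > 0. Then there exists a constant C, depending only on n, C₁ and c₁, such that for every β > 2R, every x with |x| > β, and every locally integrable f: |S_b f(x)| ≤ C ‖b‖_∞ |x|^{-n} ∫_{|z|<R} |f(z)| dz. (Pointwise decay of the commutator of the area integral away from the support of b.) -/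
open MeasureTheory ENNReal Set

noncomputable section

section CommutatorDecayAux

/-- `exp(-c m² / t²) ≤ 1`. -/
lemma expTerm_le_one {c m t : ℝ} (hc : 0 < c) (ht : 0 < t) :
    Real.exp (-c * m ^ 2 / t ^ 2) ≤ 1 := by
  rw [Real.exp_le_one_iff, neg_mul, neg_div]
  exact neg_nonpos.2 (by positivity)

/-- Monotonicity of the Gaussian factor. -/
lemma expTerm_mono {c t m₁ m₂ : ℝ} (hc : 0 < c) (ht : 0 < t) (h0 : 0 ≤ m₁) (h : m₁ ≤ m₂) :
    Real.exp (-c * m₂ ^ 2 / t ^ 2) ≤ Real.exp (-c * m₁ ^ 2 / t ^ 2) := by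
  apply Real.exp_le_exp.2
  rw [neg_mul, neg_div, neg_mul, neg_div, neg_le_neg_iff]
  gcongr

/-- The key one-dimensional integral estimate. -/
lemma keyInt (n : ℕ) (hn : 1 ≤ n) (c X R : ℝ) (hc : 0 < c) (hR : 0 < R) (hRX : 2 * R < X) :
    (∫⁻ t in Ioi (0:ℝ), ENNReal.ofReal
        (t ^ (-(2 * (n : ℝ)) - 1) * Real.exp (-c * (max (X - t - R) 0) ^ 2 / t ^ 2)))
      ≤ ENNReal.ofReal (((Nat.factorial (n+1) : ℝ) * (16 / c) ^ (n + 1) + 16 ^ n)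
          / X ^ (2 * n)) := by
  have hX : 0 < X := by linarith
  have hn' : (1:ℝ) ≤ (n:ℝ) := by exact_mod_cast hn
  set a := X / 4 with ha_def
  have ha : 0 < a := by positivity
  set A₁ : ℝ := (Nat.factorial (n+1) : ℝ) * (16 / c) ^ (n + 1) with hA₁def
  have hA₁0 : 0 < A₁ :=
    mul_pos (Nat.cast_pos.2 (Nat.factorial_pos _)) (pow_pos (div_pos (by norm_num) hc) _)
  rw [show Ioi (0:ℝ) = Ioc 0 a ∪ Ioi a from (Ioc_union_Ioi_eq_Ioi ha.le).symm,
    lintegral_union measurableSet_Ioi Ioc_disjoint_Ioi_same]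
  have h1 : (∫⁻ t in Ioc (0:ℝ) a, ENNReal.ofReal
      (t ^ (-(2 * (n : ℝ)) - 1) * Real.exp (-c * (max (X - t - R) 0) ^ 2 / t ^ 2)))
      ≤ ENNReal.ofReal (A₁ / X ^ (2 * n)) := by
    have hbound : ∀ t ∈ Ioc (0:ℝ) a,
        t ^ (-(2 * (n : ℝ)) - 1) * Real.exp (-c * (max (X - t - R) 0) ^ 2 / t ^ 2)
          ≤ A₁ * a / X ^ (2 * n + 2) := by
      intro t ht
      obtain ⟨ht0, hta⟩ := ht
      have hm : X / 4 ≤ max (X - t - R) 0 := le_max_of_le_left (by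
        have : t ≤ X / 4 := by rw [← ha_def]; exact hta
        linarith)
      have hexp1 : Real.exp (-c * (max (X - t - R) 0) ^ 2 / t ^ 2)
          ≤ Real.exp (-c * (X / 4) ^ 2 / t ^ 2) :=
        expTerm_mono hc ht0 (by positivity) hm
      have hu : 0 < c * (X / 4) ^ 2 / t ^ 2 := by positivity
      have hexp2 : Real.exp (-(c * (X / 4) ^ 2 / t ^ 2))
          ≤ (Nat.factorial (n+1) : ℝ) * ((c * (X / 4) ^ 2 / t ^ 2) ^ (n + 1))⁻¹ := by
        rw [Real.exp_neg]
        have hfact := Real.pow_div_factorial_le_exp _ hu.le (n + 1)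
        calc (Real.exp (c * (X / 4) ^ 2 / t ^ 2))⁻¹
            ≤ ((c * (X / 4) ^ 2 / t ^ 2) ^ (n + 1) / (Nat.factorial (n+1) : ℝ))⁻¹ :=
              inv_anti₀ (by positivity) hfact
          _ = (Nat.factorial (n+1) : ℝ) * ((c * (X / 4) ^ 2 / t ^ 2) ^ (n + 1))⁻¹ := by
              rw [inv_div]; ring
      have hrp : t ^ (-(2 * (n : ℝ)) - 1) = (t ^ (2 * n + 1))⁻¹ := by
        rw [← Real.rpow_natCast t (2 * n + 1), ← Real.rpow_neg ht0.le]
        congr 1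
        push_cast
        ring
      have heq : -c * (X / 4) ^ 2 / t ^ 2 = -(c * (X / 4) ^ 2 / t ^ 2) := by ring
      have hchain : t ^ (-(2 * (n : ℝ)) - 1) * Real.exp (-c * (max (X - t - R) 0) ^ 2 / t ^ 2)
          ≤ (t ^ (2 * n + 1))⁻¹ *
            ((Nat.factorial (n+1) : ℝ) * ((c * (X / 4) ^ 2 / t ^ 2) ^ (n + 1))⁻¹) := by
        rw [hrp]
        apply mul_le_mul_of_nonneg_left _ (by positivity)
        exact le_trans hexp1 (by rw [heq] at *; exact hexp2)
      refine le_trans hchain ?_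
      have hid : (t ^ (2 * n + 1))⁻¹ *
            ((Nat.factorial (n+1) : ℝ) * ((c * (X / 4) ^ 2 / t ^ 2) ^ (n + 1))⁻¹)
          = A₁ * t / X ^ (2 * n + 2) := by
        rw [hA₁def]
        simp only [div_pow, mul_pow, pow_succ, pow_mul]
        field_simp
        rw [one_pow, ← pow_mul, mul_comm n 2, pow_mul]
        norm_num
      rw [hid]
      exact (div_le_div_iff_of_pos_right (by positivity)).2 (mul_le_mul_of_nonneg_left hta hA₁0.le)
    calc (∫⁻ t in Ioc (0:ℝ) a, ENNReal.ofReal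
        (t ^ (-(2 * (n : ℝ)) - 1) * Real.exp (-c * (max (X - t - R) 0) ^ 2 / t ^ 2)))
        ≤ ∫⁻ _ in Ioc (0:ℝ) a, ENNReal.ofReal (A₁ * a / X ^ (2 * n + 2)) :=
          setLIntegral_mono' measurableSet_Ioc
            (fun t ht => ENNReal.ofReal_le_ofReal (hbound t ht))
      _ = ENNReal.ofReal (A₁ * a / X ^ (2 * n + 2)) * volume (Ioc (0:ℝ) a) :=
          setLIntegral_const _ _
      _ = ENNReal.ofReal (A₁ * a / X ^ (2 * n + 2)) * ENNReal.ofReal a := by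
          rw [Real.volume_Ioc, sub_zero]
      _ = ENNReal.ofReal (A₁ * a / X ^ (2 * n + 2) * a) :=
          (ENNReal.ofReal_mul (by positivity)).symm
      _ ≤ ENNReal.ofReal (A₁ / X ^ (2 * n)) := by
          apply ENNReal.ofReal_le_ofReal
          have hval : A₁ * a / X ^ (2 * n + 2) * a = A₁ / (16 * X ^ (2 * n)) := by
            rw [ha_def]
            field_simp
            ring
          rw [hval]
          apply div_le_div_of_nonneg_left hA₁0.le (by positivity)
          nlinarith [pow_pos hX (2 * n)]
  have h2 : (∫⁻ t in Ioi a, ENNReal.ofReal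
      (t ^ (-(2 * (n : ℝ)) - 1) * Real.exp (-c * (max (X - t - R) 0) ^ 2 / t ^ 2)))
      ≤ ENNReal.ofReal ((16 ^ n : ℝ) / X ^ (2 * n)) := by
    have hp : (-(2 * (n : ℝ)) - 1) < -1 := by linarith
    calc (∫⁻ t in Ioi a, ENNReal.ofReal
        (t ^ (-(2 * (n : ℝ)) - 1) * Real.exp (-c * (max (X - t - R) 0) ^ 2 / t ^ 2)))
        ≤ ∫⁻ t in Ioi a, ENNReal.ofReal (t ^ (-(2 * (n : ℝ)) - 1)) := by
          apply setLIntegral_mono' measurableSet_Ioi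
          intro t ht
          apply ENNReal.ofReal_le_ofReal
          have ht0 : (0:ℝ) < t := ha.trans ht
          exact mul_le_of_le_one_right (Real.rpow_nonneg ht0.le _) (expTerm_le_one hc ht0)
      _ = ENNReal.ofReal (∫ t in Ioi a, t ^ (-(2 * (n : ℝ)) - 1)) :=
          (ofReal_integral_eq_lintegral_ofReal (integrableOn_Ioi_rpow_of_lt hp ha)
            ((ae_restrict_iff' measurableSet_Ioi).2
              (ae_of_all _ fun t ht => Real.rpow_nonneg (ha.trans ht).le _))).symm
      _ ≤ ENNReal.ofReal ((16 ^ n : ℝ) / X ^ (2 * n)) := by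
          apply ENNReal.ofReal_le_ofReal
          rw [integral_Ioi_rpow_of_lt hp ha]
          have he : (-(2 * (n : ℝ)) - 1 + 1) = -(2 * (n : ℝ)) := by ring
          rw [he, neg_div_neg_eq]
          have e1 : a ^ (-(2 * (n : ℝ))) = ((X / 4) ^ (2 * n) : ℝ)⁻¹ := by
            have hcast : (2 * (n : ℝ)) = ((2 * n : ℕ) : ℝ) := by push_cast; ring
            rw [ha_def, hcast, Real.rpow_neg (by positivity), Real.rpow_natCast]
          have e2 : ((X / 4) ^ (2 * n) : ℝ)⁻¹ = 16 ^ n / X ^ (2 * n) := by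
            rw [div_pow, inv_div]
            congr 1
            rw [pow_mul]
            norm_num
          rw [e1, e2]
          exact div_le_self (by positivity) (by linarith)
  calc _ ≤ ENNReal.ofReal (A₁ / X ^ (2 * n)) + ENNReal.ofReal ((16 ^ n : ℝ) / X ^ (2 * n)) :=
        add_le_add h1 h2
    _ = ENNReal.ofReal ((A₁ + 16 ^ n) / X ^ (2 * n)) := by
        rw [← ENNReal.ofReal_add (by positivity) (by positivity), ← add_div]

end CommutatorDecayAux

/-- Pointwise decay of the commutator of the area integral away from
the support of `b`: if `supp b ⊆ {|z| < R}` and `|x| > β > 2R`, then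
`S_b f(x) ≤ C ‖b‖_∞ |x|^{-n} ∫_{|z|<R} |f|`. -/
theorem commutator_areaInt_pointwise_decay
    (n : ℕ) (hn : 1 ≤ n) (C₁ c₁ : ℝ) (hC₁ : 0 < C₁) (hc₁ : 0 < c₁)
    (q : ℝ → Rn n → Rn n → ℂ)
    (hqm : ∀ t, 0 < t → Measurable (Function.uncurry (q t)))
    (hqsize : ∀ t, 0 < t → ∀ y z : Rn n,
      ‖q t y z‖ ≤ C₁ * t ^ (-(n : ℝ)) * Real.exp (-c₁ * ‖y - z‖ ^ 2 / t ^ 2)) :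
    ∃ C : ℝ, 0 < C ∧
      ∀ R : ℝ, 0 < R →
      ∀ b : Rn n → ℝ, Measurable b →
      ∀ Bb : ℝ, (∀ z, |b z| ≤ Bb) → (∀ z : Rn n, R ≤ ‖z‖ → b z = 0) →
      ∀ β : ℝ, 2 * R < β →
      ∀ x : Rn n, β < ‖x‖ →
      ∀ f : Rn n → ℂ, LocallyIntegrable f volume →
        areaIntComm n q b f x ≤
          ENNReal.ofReal (C * Bb / ‖x‖ ^ (n : ℝ)) *
            ∫⁻ z in Metric.ball (0 : Rn n) R, (‖f z‖₊ : ℝ≥0∞) := by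
  haveI : Nonempty (Fin n) := Fin.pos_iff_nonempty.1 hn
  have hball : (0:ℝ≥0∞) < volume (Metric.ball (0 : Rn n) 1) :=
    Metric.measure_ball_pos _ _ one_pos
  have hVlt : volume (Metric.ball (0 : Rn n) 1) ≠ ∞ := measure_ball_lt_top.ne
  set V : ℝ := (volume (Metric.ball (0 : Rn n) 1)).toReal with hVdef
  have hV0 : 0 < V := ENNReal.toReal_pos hball.ne' hVlt
  have hVeq : volume (Metric.ball (0 : Rn n) 1) = ENNReal.ofReal V :=
    (ENNReal.ofReal_toReal hVlt).symm
  set A : ℝ := (Nat.factorial (n+1) : ℝ) * (16 / c₁) ^ (n + 1) + 16 ^ n with hAdef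
  have hA0 : 0 < A :=
    add_pos (mul_pos (Nat.cast_pos.2 (Nat.factorial_pos _))
      (pow_pos (div_pos (by norm_num) hc₁) _)) (by positivity)
  refine ⟨C₁ * Real.sqrt (A * V), mul_pos hC₁ (Real.sqrt_pos.2 (mul_pos hA0 hV0)), ?_⟩
  intro R hR b hb Bb hBb hsupp β hβ x hβx f hf
  have hX : (0:ℝ) < ‖x‖ := by linarith
  have h2R : 2 * R < ‖x‖ := lt_trans hβ hβx
  have hbx : b x = 0 := hsupp x (by linarith)
  have hBb0 : 0 ≤ Bb := le_trans (abs_nonneg _) (hBb 0)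
  set I : ℝ≥0∞ := ∫⁻ z in Metric.ball (0 : Rn n) R, (‖f z‖₊ : ℝ≥0∞) with hIdef
  have hI : I ≠ ∞ := by
    have h1 : IntegrableOn f (Metric.closedBall (0:Rn n) R) volume :=
      hf.integrableOn_isCompact (isCompact_closedBall _ _)
    exact ((h1.mono_set Metric.ball_subset_closedBall).2).ne
  have hXn : ‖x‖ ^ ((n:ℝ)) = ‖x‖ ^ n := Real.rpow_natCast _ _
  set d : ℝ := C₁ * Real.sqrt (A * V) * Bb / ‖x‖ ^ ((n:ℝ)) with hddef
  have hd0 : 0 ≤ d := by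
    apply div_nonneg (by positivity) (Real.rpow_nonneg hX.le _)
  -- kernel estimate
  have hker : ∀ t : ℝ, 0 < t → ∀ y : Rn n, y ∈ Metric.ball x t →
      (‖∫ z, q t y z * (((b x - b z : ℝ) : ℂ) * f z)‖₊ : ℝ≥0∞) ≤
        ENNReal.ofReal (C₁ * t ^ (-(n:ℝ)) *
          Real.exp (-c₁ * (max (‖x‖ - t - R) 0) ^ 2 / t ^ 2) * Bb) * I := by
    intro t ht y hy
    have hyx : ‖y - x‖ < t := by
      have := Metric.mem_ball.1 hy
      rwa [dist_eq_norm] at this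
    calc (‖∫ z, q t y z * (((b x - b z : ℝ) : ℂ) * f z)‖₊ : ℝ≥0∞)
        ≤ ∫⁻ z, ‖q t y z * (((b x - b z : ℝ) : ℂ) * f z)‖₊ :=
          enorm_integral_le_lintegral_enorm _
      _ ≤ ∫⁻ z, (Metric.ball (0:Rn n) R).indicator
            (fun z => ENNReal.ofReal (C₁ * t ^ (-(n:ℝ)) *
              Real.exp (-c₁ * (max (‖x‖ - t - R) 0) ^ 2 / t ^ 2) * Bb)
                * (‖f z‖₊ : ℝ≥0∞)) z := by
          apply lintegral_mono
          intro z
          beta_reduce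
          by_cases hz : z ∈ Metric.ball (0:Rn n) R
          · rw [Set.indicator_of_mem hz]
            have hzR : ‖z‖ < R := by
              have := Metric.mem_ball.1 hz
              rwa [dist_zero_right] at this
            have hnorm : (‖q t y z * (((b x - b z : ℝ) : ℂ) * f z)‖₊ : ℝ≥0∞)
                = (‖q t y z‖₊ : ℝ≥0∞) *
                  ((‖((b x - b z : ℝ) : ℂ)‖₊ : ℝ≥0∞) * (‖f z‖₊ : ℝ≥0∞)) := by
              simp [nnnorm_mul, ENNReal.coe_mul]
            rw [hnorm]
            have hq : (‖q t y z‖₊ : ℝ≥0∞) ≤ ENNReal.ofReal (C₁ * t ^ (-(n:ℝ)) *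
                Real.exp (-c₁ * (max (‖x‖ - t - R) 0) ^ 2 / t ^ 2)) := by
              rw [← enorm_eq_nnnorm, ← ofReal_norm]
              apply ENNReal.ofReal_le_ofReal
              refine le_trans (hqsize t ht y z) ?_
              have h1 : max (‖x‖ - t - R) 0 ≤ ‖y - z‖ := by
                apply max_le _ (norm_nonneg _)
                have h3 : ‖x‖ ≤ ‖x - y‖ + ‖y - z‖ + ‖z‖ := by
                  calc ‖x‖ = ‖(x - y) + (y - z) + z‖ := by congr 1; abel
                    _ ≤ ‖(x - y) + (y - z)‖ + ‖z‖ := norm_add_le _ _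
                    _ ≤ ‖x - y‖ + ‖y - z‖ + ‖z‖ := by
                        gcongr
                        exact norm_add_le _ _
                have h4 : ‖x - y‖ < t := by rwa [norm_sub_rev]
                linarith
              exact mul_le_mul_of_nonneg_left
                (expTerm_mono hc₁ ht (le_max_right _ _) h1)
                (mul_nonneg hC₁.le (Real.rpow_nonneg ht.le _))
            have hbz : (‖((b x - b z : ℝ) : ℂ)‖₊ : ℝ≥0∞) ≤ ENNReal.ofReal Bb := by
              rw [← enorm_eq_nnnorm, ← ofReal_norm]
              apply ENNReal.ofReal_le_ofReal
              rw [Complex.norm_real, Real.norm_eq_abs, hbx, zero_sub, abs_neg]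
              exact hBb z
            calc (‖q t y z‖₊ : ℝ≥0∞) *
                  ((‖((b x - b z : ℝ) : ℂ)‖₊ : ℝ≥0∞) * (‖f z‖₊ : ℝ≥0∞))
                ≤ ENNReal.ofReal (C₁ * t ^ (-(n:ℝ)) *
                    Real.exp (-c₁ * (max (‖x‖ - t - R) 0) ^ 2 / t ^ 2)) *
                  (ENNReal.ofReal Bb * (‖f z‖₊ : ℝ≥0∞)) :=
                  mul_le_mul' hq (mul_le_mul_left hbz _)
              _ = ENNReal.ofReal (C₁ * t ^ (-(n:ℝ)) *
                    Real.exp (-c₁ * (max (‖x‖ - t - R) 0) ^ 2 / t ^ 2) * Bb)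
                    * (‖f z‖₊ : ℝ≥0∞) := by
                  rw [← mul_assoc, ← ENNReal.ofReal_mul
                    (mul_nonneg (mul_nonneg hC₁.le (Real.rpow_nonneg ht.le _))
                      (Real.exp_pos _).le)]
          · rw [Set.indicator_of_notMem hz]
            have hzR : R ≤ ‖z‖ := by
              have := hz
              rw [Metric.mem_ball, dist_zero_right, not_lt] at this
              exact this
            have hg0 : ((b x - b z : ℝ) : ℂ) = 0 := by
              rw [hbx, hsupp z hzR]
              norm_num
            simp [hg0]
      _ = ∫⁻ z in Metric.ball (0:Rn n) R,
            ENNReal.ofReal (C₁ * t ^ (-(n:ℝ)) *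
              Real.exp (-c₁ * (max (‖x‖ - t - R) 0) ^ 2 / t ^ 2) * Bb)
              * (‖f z‖₊ : ℝ≥0∞) := lintegral_indicator measurableSet_ball _
      _ = ENNReal.ofReal (C₁ * t ^ (-(n:ℝ)) *
            Real.exp (-c₁ * (max (‖x‖ - t - R) 0) ^ 2 / t ^ 2) * Bb) * I :=
          lintegral_const_mul' _ _ ENNReal.ofReal_ne_top
  -- main estimate of the square of the area integral
  simp only [areaIntComm, areaInt]
  have hmain : (∫⁻ t in Ioi (0:ℝ), ∫⁻ y in Metric.ball x t,
      ((‖∫ z, q t y z * (((b x - b z : ℝ) : ℂ) * f z)‖₊ : ℝ≥0∞) ^ 2) /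
        ENNReal.ofReal (t ^ ((n : ℝ) + 1)))
      ≤ ENNReal.ofReal (d ^ 2) * I ^ 2 := by
    have hstep : ∀ t ∈ Ioi (0:ℝ), (∫⁻ y in Metric.ball x t,
        ((‖∫ z, q t y z * (((b x - b z : ℝ) : ℂ) * f z)‖₊ : ℝ≥0∞) ^ 2) /
          ENNReal.ofReal (t ^ ((n : ℝ) + 1)))
        ≤ ENNReal.ofReal (C₁ ^ 2 * Bb ^ 2) *
            (ENNReal.ofReal (t ^ (-(2 * (n : ℝ)) - 1) *
              Real.exp (-c₁ * (max (‖x‖ - t - R) 0) ^ 2 / t ^ 2)) *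
              (ENNReal.ofReal V * I ^ 2)) := by
      intro t ht
      have ht0 : (0:ℝ) < t := ht
      set e : ℝ := Real.exp (-c₁ * (max (‖x‖ - t - R) 0) ^ 2 / t ^ 2) with hedef
      have he0 : 0 < e := Real.exp_pos _
      have he1 : e ≤ 1 := expTerm_le_one hc₁ ht0
      set ct : ℝ := C₁ * t ^ (-(n:ℝ)) * e * Bb with hctdef
      have htn : 0 ≤ t ^ (-(n:ℝ)) := Real.rpow_nonneg ht0.le _
      have hct0 : 0 ≤ ct :=
        mul_nonneg (mul_nonneg (mul_nonneg hC₁.le htn) he0.le) hBb0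
      calc (∫⁻ y in Metric.ball x t,
            ((‖∫ z, q t y z * (((b x - b z : ℝ) : ℂ) * f z)‖₊ : ℝ≥0∞) ^ 2) /
              ENNReal.ofReal (t ^ ((n : ℝ) + 1)))
          ≤ ∫⁻ _ in Metric.ball x t,
              (ENNReal.ofReal ct * I) ^ 2 / ENNReal.ofReal (t ^ ((n : ℝ) + 1)) := by
            apply setLIntegral_mono' measurableSet_ball
            intro y hy
            gcongr
            exact hker t ht0 y hy
        _ = (ENNReal.ofReal ct * I) ^ 2 / ENNReal.ofReal (t ^ ((n : ℝ) + 1)) *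
              volume (Metric.ball x t) := setLIntegral_const _ _
        _ = (ENNReal.ofReal ct * I) ^ 2 / ENNReal.ofReal (t ^ ((n : ℝ) + 1)) *
              (ENNReal.ofReal (t ^ n) * ENNReal.ofReal V) := by
            rw [Measure.addHaar_ball _ _ ht0.le, hVeq, finrank_euclideanSpace_fin]
        _ = (ENNReal.ofReal (ct ^ 2) * ENNReal.ofReal (t ^ n) /
              ENNReal.ofReal (t ^ ((n : ℝ) + 1))) * (ENNReal.ofReal V * I ^ 2) := by
            rw [mul_pow, ← ENNReal.ofReal_pow hct0]
            simp only [div_eq_mul_inv]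
            ring
        _ = ENNReal.ofReal (ct ^ 2 * t ^ n / t ^ ((n : ℝ) + 1)) *
              (ENNReal.ofReal V * I ^ 2) := by
            rw [← ENNReal.ofReal_mul (by positivity),
              ← ENNReal.ofReal_div_of_pos (Real.rpow_pos_of_pos ht0 _)]
        _ ≤ ENNReal.ofReal (C₁ ^ 2 * Bb ^ 2 * (t ^ (-(2 * (n : ℝ)) - 1) * e)) *
              (ENNReal.ofReal V * I ^ 2) := by
            apply mul_le_mul_left
            apply ENNReal.ofReal_le_ofReal
            have hrp : (t ^ (-(n:ℝ))) ^ 2 * t ^ n / t ^ ((n : ℝ) + 1)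
                = t ^ (-(2 * (n : ℝ)) - 1) := by
              rw [← Real.rpow_natCast t n, ← Real.rpow_natCast (t ^ (-(n:ℝ))) 2,
                ← Real.rpow_mul ht0.le, ← Real.rpow_add ht0, ← Real.rpow_sub ht0]
              congr 1
              push_cast
              ring
            have hexpand : ct ^ 2 * t ^ n / t ^ ((n : ℝ) + 1)
                = C₁ ^ 2 * Bb ^ 2 * ((t ^ (-(n:ℝ))) ^ 2 * t ^ n / t ^ ((n : ℝ) + 1)) * e ^ 2 := by
              rw [hctdef]; ring
            rw [hexpand, hrp]
            have he2 : e ^ 2 ≤ e := by nlinarith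
            have hstep2 : C₁ ^ 2 * Bb ^ 2 * t ^ (-(2 * (n : ℝ)) - 1) * e ^ 2
                ≤ C₁ ^ 2 * Bb ^ 2 * t ^ (-(2 * (n : ℝ)) - 1) * e :=
              mul_le_mul_of_nonneg_left he2
                (mul_nonneg (by positivity) (Real.rpow_nonneg ht0.le _))
            exact le_trans hstep2 (le_of_eq (by ring))
        _ = ENNReal.ofReal (C₁ ^ 2 * Bb ^ 2) *
              (ENNReal.ofReal (t ^ (-(2 * (n : ℝ)) - 1) * e) *
                (ENNReal.ofReal V * I ^ 2)) := by
            rw [ENNReal.ofReal_mul (by positivity), mul_assoc]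
    calc (∫⁻ t in Ioi (0:ℝ), ∫⁻ y in Metric.ball x t,
          ((‖∫ z, q t y z * (((b x - b z : ℝ) : ℂ) * f z)‖₊ : ℝ≥0∞) ^ 2) /
            ENNReal.ofReal (t ^ ((n : ℝ) + 1)))
        ≤ ∫⁻ t in Ioi (0:ℝ), ENNReal.ofReal (C₁ ^ 2 * Bb ^ 2) *
            ((fun s => ENNReal.ofReal (s ^ (-(2 * (n : ℝ)) - 1) *
              Real.exp (-c₁ * (max (‖x‖ - s - R) 0) ^ 2 / s ^ 2))) t *
              (ENNReal.ofReal V * I ^ 2)) :=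
          setLIntegral_mono' measurableSet_Ioi hstep
      _ = ENNReal.ofReal (C₁ ^ 2 * Bb ^ 2) *
            ((∫⁻ t in Ioi (0:ℝ), ENNReal.ofReal (t ^ (-(2 * (n : ℝ)) - 1) *
              Real.exp (-c₁ * (max (‖x‖ - t - R) 0) ^ 2 / t ^ 2))) *
              (ENNReal.ofReal V * I ^ 2)) := by
          rw [lintegral_const_mul' _ _ ENNReal.ofReal_ne_top,
            lintegral_mul_const' _ _
              (ENNReal.mul_ne_top ENNReal.ofReal_ne_top (ENNReal.pow_ne_top hI))]
      _ ≤ ENNReal.ofReal (C₁ ^ 2 * Bb ^ 2) *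
            (ENNReal.ofReal (A / ‖x‖ ^ (2 * n)) * (ENNReal.ofReal V * I ^ 2)) := by
          gcongr
          exact keyInt n hn c₁ ‖x‖ R hc₁ hR h2R
      _ = ENNReal.ofReal (d ^ 2) * I ^ 2 := by
          have h7 : ENNReal.ofReal (C₁ ^ 2 * Bb ^ 2) *
              (ENNReal.ofReal (A / ‖x‖ ^ (2 * n)) * (ENNReal.ofReal V * I ^ 2))
              = (ENNReal.ofReal (C₁ ^ 2 * Bb ^ 2) * ENNReal.ofReal (A / ‖x‖ ^ (2 * n)) *
                  ENNReal.ofReal V) * I ^ 2 := by ring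
          rw [h7, ← ENNReal.ofReal_mul (by positivity), ← ENNReal.ofReal_mul (by positivity)]
          congr 2
          rw [hddef, hXn]
          have hs : Real.sqrt (A * V) ^ 2 = A * V := Real.sq_sqrt (by positivity)
          have hxn0 : (‖x‖ : ℝ) ^ n ≠ 0 := by positivity
          rw [div_pow, mul_pow, mul_pow, hs]
          field_simp
          ring
  calc (∫⁻ t in Ioi (0:ℝ), ∫⁻ y in Metric.ball x t,
        ((‖∫ z, q t y z * (((b x - b z : ℝ) : ℂ) * f z)‖₊ : ℝ≥0∞) ^ 2) /
          ENNReal.ofReal (t ^ ((n : ℝ) + 1))) ^ (1/2 : ℝ)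
      ≤ (ENNReal.ofReal (d ^ 2) * I ^ 2) ^ (1/2 : ℝ) :=
        ENNReal.rpow_le_rpow hmain (by norm_num)
    _ = ENNReal.ofReal d * I := by
        rw [ENNReal.mul_rpow_of_nonneg _ _ (by norm_num : (0:ℝ) ≤ 1/2)]
        congr 1
        · rw [ENNReal.ofReal_pow hd0, ← ENNReal.rpow_natCast (ENNReal.ofReal d) 2,
            ← ENNReal.rpow_mul]
          norm_num
        · rw [← ENNReal.rpow_natCast I 2, ← ENNReal.rpow_mul]
          norm_num
end
end
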